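/- arXiv:2409.06632 — 4 statements merged into one kernel-verified Lean document; each statement's English description precedes it below -/
import Mathlib

section
/- Let (B, ∘, 1, ε) be a unital associative algebra with an algebra map ε: B → K. Define on B⊗B the operation (x_1⊗x_2) ∘' (y_1⊗y_2) = ε(y_1) x_1 ⊗ (x_2 ∘ y_2) + ε(x_2) (x_1 ∘ y_1) ⊗ y_2 − ε(x_2 ∘ y_1) x_1 ⊗ y_2. Then (B⊗B, ∘', 1⊗1) is a unital associative algebra with counit ε⊗ε. -/
open TensorProduct

/-- If `(B, ∘, 1, ε)` is a unital associative algebra with an augmentation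
`ε : B → K`, then `(x₁⊗x₂) ∘' (y₁⊗y₂) = ε(y₁)x₁⊗(x₂∘y₂) + ε(x₂)(x₁∘y₁)⊗y₂ − ε(x₂∘y₁)x₁⊗y₂`
makes `B ⊗ B` a unital associative algebra with unit `1⊗1` and augmentation `ε⊗ε`. -/
theorem stmt9 (K B : Type*) [Field K] [Ring B] [Algebra K B] (ε : B →ₐ[K] K) :
    ∀ M : (B ⊗[K] B) ⊗[K] (B ⊗[K] B) →ₗ[K] B ⊗[K] B,
      M = TensorProduct.map
              ((TensorProduct.rid K B).toLinearMap ∘ₗ LinearMap.lTensor B ε.toLinearMap)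
              (LinearMap.mul' K B)
            ∘ₗ (TensorProduct.tensorTensorTensorComm K B B B B).toLinearMap
          + TensorProduct.map (LinearMap.mul' K B)
              ((TensorProduct.lid K B).toLinearMap ∘ₗ LinearMap.rTensor B ε.toLinearMap)
            ∘ₗ (TensorProduct.tensorTensorTensorComm K B B B B).toLinearMap
          - (TensorProduct.rid K (B ⊗[K] B)).toLinearMap
            ∘ₗ LinearMap.lTensor (B ⊗[K] B) (ε.toLinearMap ∘ₗ LinearMap.mul' K B)
            ∘ₗ (TensorProduct.tensorTensorTensorComm K B B B B).toLinearMap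
            ∘ₗ LinearMap.lTensor (B ⊗[K] B) (TensorProduct.comm K B B).toLinearMap →
    ∀ ε' : B ⊗[K] B →ₗ[K] K,
      ε' = (TensorProduct.lid K K).toLinearMap
            ∘ₗ TensorProduct.map ε.toLinearMap ε.toLinearMap →
      -- associativity
      (∀ a b c : B ⊗[K] B, M (M (a ⊗ₜ[K] b) ⊗ₜ[K] c) = M (a ⊗ₜ[K] M (b ⊗ₜ[K] c)))
      -- unit laws for `1 ⊗ 1`
      ∧ (∀ a : B ⊗[K] B, M (((1 : B) ⊗ₜ[K] (1 : B)) ⊗ₜ[K] a) = a)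
      ∧ (∀ a : B ⊗[K] B, M (a ⊗ₜ[K] ((1 : B) ⊗ₜ[K] (1 : B))) = a)
      -- `ε ⊗ ε` is an augmentation for `∘'`
      ∧ (∀ a b : B ⊗[K] B, ε' (M (a ⊗ₜ[K] b)) = ε' a * ε' b)
      ∧ ε' ((1 : B) ⊗ₜ[K] (1 : B)) = 1 := by
  intro M hM ε' hε'
  have hMt : ∀ x1 x2 y1 y2 : B, M ((x1 ⊗ₜ[K] x2) ⊗ₜ[K] (y1 ⊗ₜ[K] y2)) =
      ε y1 • x1 ⊗ₜ[K] (x2*y2) + ε x2 • (x1*y1) ⊗ₜ[K] y2 - ε (x2*y1) • x1 ⊗ₜ[K] y2 := by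
    intro x1 x2 y1 y2
    subst hM
    simp [tensorTensorTensorComm_tmul, LinearMap.mul'_apply, smul_tmul']
  have hεt : ∀ x y : B, ε' (x ⊗ₜ[K] y) = ε x * ε y := by
    intro x y; subst hε'; simp
  clear hM hε'
  refine ⟨?_, ?_, ?_, ?_, ?_⟩
  · intro a b c
    induction a using TensorProduct.induction_on with
    | zero => simp
    | add u v hu hv => simp [add_tmul, map_add, hu, hv]
    | tmul x1 x2 =>
      induction b using TensorProduct.induction_on with
      | zero => simp
      | add u v hu hv => simp [add_tmul, tmul_add, map_add, hu, hv]
      | tmul y1 y2 =>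
        induction c using TensorProduct.induction_on with
        | zero => simp
        | add u v hu hv => simp [tmul_add, map_add, hu, hv]
        | tmul z1 z2 =>
          simp only [hMt, add_tmul, sub_tmul, tmul_add, tmul_sub, ← smul_tmul', tmul_smul,
            map_add, map_sub, map_smul, smul_add, smul_sub, smul_smul, map_mul, mul_assoc, smul_mul_assoc, mul_smul_comm]
          module
  · intro a
    induction a using TensorProduct.induction_on with
    | zero => simp
    | add u v hu hv => simp [tmul_add, map_add, hu, hv]
    | tmul x y => simp [hMt]
  · intro a
    induction a using TensorProduct.induction_on with
    | zero => simp
    | add u v hu hv => simp [add_tmul, map_add, hu, hv]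
    | tmul x y => simp [hMt]
  · intro a b
    induction a using TensorProduct.induction_on with
    | zero => simp
    | add u v hu hv => simp [add_tmul, map_add, hu, hv, add_mul]
    | tmul x1 x2 =>
      induction b using TensorProduct.induction_on with
      | zero => simp
      | add u v hu hv => simp [tmul_add, map_add, hu, hv, mul_add]
      | tmul y1 y2 =>
        simp only [hMt, map_add, map_sub, map_smul, hεt, map_mul, smul_eq_mul]
        ring
  · simp [hεt]
end

section
/- Let B have a unital counital algebra structure (B, ∘, 1, ε) and a coaugmented counital coalgebra structure (B, Δ, ε, 1). Then (B, ∘, 1, Δ, ε) is a unital infinitesimal bialgebra if and only if Δ: (B, ∘) → (B⊗B, ∘') is an algebra homomorphism, where (x_1⊗x_2) ∘' (y_1⊗y_2) = ε(y_1)x_1⊗(x_2∘y_2) + ε(x_2)(x_1∘y_1)⊗y_2 − ε(x_2∘y_1)x_1⊗y_2. -/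
open TensorProduct

/-- Given a unital counital algebra and a coaugmented counital coalgebra
structure on `B` (with common unit `1` and common counit/augmentation `ε`), `B` is a unital
infinitesimal bialgebra iff `Δ : (B,∘) → (B⊗B, ∘')` is an algebra homomorphism. -/
theorem stmt10 (K B : Type*) [Field K] [Ring B] [Algebra K B] [Coalgebra K B]
    (hone : Coalgebra.comul (R := K) (1 : B) = (1 : B) ⊗ₜ[K] (1 : B))
    (honeCounit : Coalgebra.counit (R := K) (1 : B) = 1)
    (hcounitMul : ∀ x y : B,
      Coalgebra.counit (R := K) (x * y)
        = Coalgebra.counit (R := K) x * Coalgebra.counit (R := K) y) :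
    ∀ M : (B ⊗[K] B) ⊗[K] (B ⊗[K] B) →ₗ[K] B ⊗[K] B,
      M = TensorProduct.map
              ((TensorProduct.rid K B).toLinearMap
                ∘ₗ LinearMap.lTensor B (Coalgebra.counit (R := K)))
              (LinearMap.mul' K B)
            ∘ₗ (TensorProduct.tensorTensorTensorComm K B B B B).toLinearMap
          + TensorProduct.map (LinearMap.mul' K B)
              ((TensorProduct.lid K B).toLinearMap
                ∘ₗ LinearMap.rTensor B (Coalgebra.counit (R := K)))
            ∘ₗ (TensorProduct.tensorTensorTensorComm K B B B B).toLinearMap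
          - (TensorProduct.rid K (B ⊗[K] B)).toLinearMap
            ∘ₗ LinearMap.lTensor (B ⊗[K] B)
                ((Coalgebra.counit (R := K)) ∘ₗ LinearMap.mul' K B)
            ∘ₗ (TensorProduct.tensorTensorTensorComm K B B B B).toLinearMap
            ∘ₗ LinearMap.lTensor (B ⊗[K] B) (TensorProduct.comm K B B).toLinearMap →
      -- unital infinitesimal bialgebra ↔ Δ is multiplicative for ∘'
      ((∀ x y : B,
          Coalgebra.comul (R := K) (x * y)
            = LinearMap.lTensor B (LinearMap.mulRight K y) (Coalgebra.comul x)
              + LinearMap.rTensor B (LinearMap.mulLeft K x) (Coalgebra.comul y)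
              - x ⊗ₜ[K] y)
        ↔ (∀ x y : B,
            Coalgebra.comul (R := K) (x * y)
              = M (Coalgebra.comul (R := K) x ⊗ₜ[K] Coalgebra.comul (R := K) y))) := by
  intro M hM
  have Mpure : ∀ a b c d : B, M ((a ⊗ₜ[K] b) ⊗ₜ[K] (c ⊗ₜ[K] d)) =
      Coalgebra.counit (R := K) c • (a ⊗ₜ[K] (b * d))
      + Coalgebra.counit (R := K) b • ((a * c) ⊗ₜ[K] d)
      - Coalgebra.counit (R := K) (b * c) • (a ⊗ₜ[K] d) := by
    intro a b c d
    subst hM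
    simp [tensorTensorTensorComm_tmul, LinearMap.mul'_apply, smul_tmul']
  have key : ∀ x y : B,
      M (Coalgebra.comul (R := K) x ⊗ₜ[K] Coalgebra.comul (R := K) y)
        = LinearMap.lTensor B (LinearMap.mulRight K y) (Coalgebra.comul x)
          + LinearMap.rTensor B (LinearMap.mulLeft K x) (Coalgebra.comul y)
          - x ⊗ₜ[K] y := by
    intro x y
    obtain ⟨sx, hx⟩ := TensorProduct.exists_finset (Coalgebra.comul (R := K) x)
    obtain ⟨sy, hy⟩ := TensorProduct.exists_finset (Coalgebra.comul (R := K) y)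
    have hx2 : ∑ p ∈ sx, Coalgebra.counit (R := K) p.2 • p.1 = x := by
      have h := Coalgebra.lTensor_counit_comul (R := K) x
      rw [hx, map_sum] at h
      simpa using congrArg (TensorProduct.rid K B) h
    have hy1 : ∑ q ∈ sy, Coalgebra.counit (R := K) q.1 • q.2 = y := by
      have h := Coalgebra.rTensor_counit_comul (R := K) y
      rw [hy, map_sum] at h
      simpa using congrArg (TensorProduct.lid K B) h
    rw [hx, hy, sum_tmul, map_sum]
    simp only [tmul_sum, map_sum, Mpure]
    simp only [map_sum, LinearMap.lTensor_tmul, LinearMap.rTensor_tmul,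
      LinearMap.mulRight_apply, LinearMap.mulLeft_apply]
    rw [← hx2, ← hy1]
    simp only [Finset.mul_sum, Finset.sum_mul, tmul_sum, sum_tmul, smul_mul_assoc,
      mul_smul_comm, tmul_smul, smul_tmul', smul_smul, hcounitMul,
      Finset.sum_add_distrib, Finset.sum_sub_distrib]
    rw [Finset.sum_comm (s := sx) (t := sy)]
    congr 1
    · congr 1
      exact Finset.sum_comm
    · simp only [Finset.smul_sum, smul_tmul', smul_smul]
      rw [Finset.sum_comm]
      exact Finset.sum_congr rfl fun p _ => Finset.sum_congr rfl fun q _ => by rw [mul_comm]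
  exact forall₂_congr fun x y => by rw [key]
end

section
/- Let (V, •, ∘, 1, ∂) be a 2-associative differential algebra: (V, •, 1, ∂) is a differential graded algebra and ∘ is a second associative operation with the same unit 1. Define m_n: V^{⊗n} → V recursively by m_1 = ∂ and m_n = ∂∘^{(n−1)} − Σ_{k=2}^n ∘^{(k−1)} Σ_{i+1+j=k, i,j≥0} id^{⊗i} ⊗ m_{n−i−j} ⊗ id^{⊗j}. Then for all n ≥ 4 and homogeneous v_1,…,v_n: m_n(v_1⊗⋯⊗v_n) = ∂(v_1∘⋯∘v_n) − ∂(v_1∘⋯∘v_{n−1})∘v_n − (−1)^{|v_1|} v_1∘∂(v_2∘⋯∘v_n) + (−1)^{|v_1|} v_1∘∂(v_2∘⋯∘v_{n−1})∘v_n. -/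
noncomputable section

namespace Paper

variable {K V : Type*} [Field K] [AddCommGroup V] [Module K V]

/-- Iterated product `v₁ ∘ (v₂ ∘ (⋯ ∘ (vₙ ∘ 1)))` of a list of elements of `V`;
for a unital operation this is `∘^{(n-1)}` on nonempty lists. -/
def cprod (circ : V →ₗ[K] V →ₗ[K] V) (one : V) : List V → V
  | [] => one
  | a :: l => circ a (cprod circ one l)

variable (𝒜 : ℤ → Submodule K V)

/-- The underlying list of vectors of a list of homogeneous elements. -/
def toV : List (Σ i : ℤ, 𝒜 i) → List V := fun l => l.map fun p => (p.2 : V)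

/-- Total degree of a list of homogeneous elements. -/
def degsum : List (Σ i : ℤ, 𝒜 i) → ℤ := fun l => (l.map Sigma.fst).sum

end Paper

open Paper

/-!
Substituting the recursion, a term `∘(id^{⊗i} ⊗ m_r ⊗ id^{⊗j})` with `r ≥ 2` is, by induction on
`n`, a signed sum of four terms `∘(id^{⊗a} ⊗ ∂∘^{(b-a-1)} ⊗ id^{⊗(n-b)})` (associativity and the
common unit of `∘` absorb the outer inputs), and for `r = 1` it is one such term. Writing `F(a, b)`
for the term in which `∂` acts on the inputs `a+1, …, b`, each summand becomes the mixed second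
difference of `F` over its block, and `F` vanishes on empty blocks because a derivation of `•`
kills the unit. The double sum therefore telescopes to `F(0, n-1) + F(1, n) - F(1, n-1)`, which is
the formula; the induction runs over all `n ≥ 2`.
-/

/- The pair `(k, i)` stands for the block `[i, i + n - k + 1)` of `{0, …, n - 1}` and the summand
is the mixed second difference of `F` at it, so the double sum telescopes. -/
theorem Finset.sum_Icc_sum_range_mixed_diff {M : Type*} [AddCommGroup M] (F : ℕ → ℕ → M)
    (hF : ∀ i j, j ≤ i → F i j = 0) (n : ℕ) (hn : 2 ≤ n) :
    ∑ k ∈ Finset.Icc 2 n, ∑ i ∈ Finset.range k,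
        (F i (i + (n - k) + 1) - F i (i + (n - k)) - F (i + 1) (i + (n - k) + 1)
          + F (i + 1) (i + (n - k)))
      = F 0 (n - 1) + F 1 n - F 1 (n - 1) := by
  set G : ℕ → ℕ → M := fun s i => F i (i + s) - F (i + 1) (i + s)
  set R : ℕ → M := fun k => ∑ i ∈ Finset.range k, G (n + 1 - k) i + F k n
  have hinner : ∀ k ∈ Finset.Icc 2 n,
      ∑ i ∈ Finset.range k, (F i (i + (n - k) + 1) - F i (i + (n - k))
          - F (i + 1) (i + (n - k) + 1) + F (i + 1) (i + (n - k)))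
        = -(R (k + 1) - R k) := by
    intro k hk
    have hkn : k ≤ n := (Finset.mem_Icc.mp hk).2
    have hs : n + 1 - k = n - k + 1 := by omega
    have hs' : n + 1 - (k + 1) = n - k := by omega
    have hterm : ∀ i, F i (i + (n - k) + 1) - F i (i + (n - k)) - F (i + 1) (i + (n - k) + 1)
        + F (i + 1) (i + (n - k)) = G (n - k + 1) i - G (n - k) i := by
      intro i
      simp only [G, ← add_assoc]
      abel
    simp only [hterm, Finset.sum_sub_distrib, R, hs, hs', Finset.sum_range_succ, G,
      Nat.add_sub_cancel' hkn]
    abel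
  have hR2 : R 2 = F 0 (n - 1) + F 1 n - F 1 (n - 1) := by
    have h1 : n + 1 - 2 = n - 1 := by omega
    have h2 : 1 + (n - 1) = n := by omega
    simp only [R, G, h1, h2, Finset.sum_range_succ, Finset.sum_range_zero, zero_add]
    abel
  have hRtop : R (n + 1) = 0 := by
    simp [R, G, hF]
  rw [Finset.sum_congr rfl hinner, Finset.sum_neg_distrib, Finset.sum_Icc_sub (by omega), hRtop,
    hR2]
  abel

theorem List.exists_eq_append_append {α : Type*} {l : List α} {i r : ℕ} (h : i + r ≤ l.length) :
    ∃ p b s : List α, l = p ++ b ++ s ∧ p.length = i ∧ b.length = r :=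
  ⟨l.take i, (l.drop i).take r, l.drop (i + r),
    by rw [List.append_assoc, ← List.drop_drop, List.take_append_drop, List.take_append_drop],
    by simp; omega, by simp; omega⟩

theorem List.exists_eq_cons_append_singleton {α : Type*} {l : List α} {n : ℕ}
    (h : l.length = n + 2) : ∃ x q z, l = x :: (q ++ [z]) ∧ q.length = n := by
  obtain ⟨x, t, rfl⟩ := List.exists_cons_of_length_eq_add_one h
  rcases List.eq_nil_or_concat' t with rfl | ⟨q, z, rfl⟩
  · simp at h
  · exact ⟨x, q, z, rfl, by simpa using h⟩

namespace Paper

section Blocks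

variable {K V : Type*} [Field K] [AddCommGroup V] [Module K V] {𝒜 : ℤ → Submodule K V}
  (circ : V →ₗ[K] V →ₗ[K] V) (one : V)

theorem cprod_append (hassoc : ∀ u v w : V, circ (circ u v) w = circ u (circ v w))
    (hone : ∀ v : V, circ one v = v) (l₁ l₂ : List V) :
    cprod circ one (l₁ ++ l₂) = circ (cprod circ one l₁) (cprod circ one l₂) := by
  induction l₁ with
  | nil => exact (hone _).symm
  | cons a t ih => simp only [List.cons_append, cprod, ih, hassoc]

@[simp] theorem toV_nil : toV 𝒜 [] = [] := rfl

@[simp] theorem toV_cons (a : Σ i : ℤ, 𝒜 i) (l : List (Σ i : ℤ, 𝒜 i)) :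
    toV 𝒜 (a :: l) = (a.2 : V) :: toV 𝒜 l := rfl

@[simp] theorem toV_append (l₁ l₂ : List (Σ i : ℤ, 𝒜 i)) :
    toV 𝒜 (l₁ ++ l₂) = toV 𝒜 l₁ ++ toV 𝒜 l₂ := List.map_append

@[simp] theorem degsum_nil : degsum 𝒜 [] = 0 := rfl

@[simp] theorem degsum_cons (a : Σ i : ℤ, 𝒜 i) (l : List (Σ i : ℤ, 𝒜 i)) :
    degsum 𝒜 (a :: l) = a.1 + degsum 𝒜 l := by
  simp [degsum]

@[simp] theorem degsum_append (l₁ l₂ : List (Σ i : ℤ, 𝒜 i)) :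
    degsum 𝒜 (l₁ ++ l₂) = degsum 𝒜 l₁ + degsum 𝒜 l₂ := by
  simp [degsum]

/-- `(−1)^{deg p} ∘(id^{⊗ len p} ⊗ f ⊗ id^{⊗ len s})` applied to `p ⊗ b ⊗ s`, the Koszul sign
coming from `f` passing `p`. -/
def blockTerm (f : List V → V) (p b s : List (Σ i : ℤ, 𝒜 i)) : V :=
  (-1 : K) ^ degsum 𝒜 p • cprod circ one (toV 𝒜 p ++ f (toV 𝒜 b) :: toV 𝒜 s)

/-- `blockTerm` for the block `[i, j)` of `l`; by truncated subtraction the block is empty when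
`j ≤ i`. -/
def blockAt (f : List V → V) (l : List (Σ i : ℤ, 𝒜 i)) (i j : ℕ) : V :=
  blockTerm circ one f (l.take i) ((l.drop i).take (j - i)) (l.drop j)

theorem blockAt_add (f : List V → V) (l : List (Σ i : ℤ, 𝒜 i)) (i r : ℕ) :
    blockAt circ one f l i (i + r)
      = (-1 : K) ^ degsum 𝒜 (l.take i) •
          cprod circ one ((toV 𝒜 l).take i ++ f (((toV 𝒜 l).drop i).take r)
            :: (toV 𝒜 l).drop (i + r)) := by
  simp [blockAt, blockTerm, toV, List.map_take, List.map_drop]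

theorem blockAt_eq_blockTerm (f : List V → V) {l p b s : List (Σ i : ℤ, 𝒜 i)} {i j : ℕ}
    (hl : l = p ++ b ++ s) (hi : i = p.length) (hj : j = p.length + b.length) :
    blockAt circ one f l i j = blockTerm circ one f p b s := by
  subst hl hi hj
  simp [blockAt]

def boundaryFormula (δ : V →ₗ[K] V) (x z : Σ i : ℤ, 𝒜 i) (mid : List (Σ i : ℤ, 𝒜 i)) : V :=
  δ (cprod circ one (toV 𝒜 (x :: (mid ++ [z]))))
    - circ (δ (cprod circ one (toV 𝒜 (x :: mid)))) (z.2 : V)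
    - ((-1 : K) ^ x.1) • circ (x.2 : V) (δ (cprod circ one (toV 𝒜 (mid ++ [z]))))
    + ((-1 : K) ^ x.1) • circ (x.2 : V) (circ (δ (cprod circ one (toV 𝒜 mid))) (z.2 : V))

variable {circ one} {δ : V →ₗ[K] V} {m : List V → V}

theorem blockAt_eq_zero_of_le (hassoc : ∀ u v w : V, circ (circ u v) w = circ u (circ v w))
    (hone : ∀ v : V, circ one v = v) (hδ : δ one = 0)
    (l : List (Σ i : ℤ, 𝒜 i)) {i j : ℕ} (hji : j ≤ i) :
    blockAt circ one (δ ∘ cprod circ one) l i j = 0 := by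
  simp [blockAt, blockTerm, Nat.sub_eq_zero_of_le hji, cprod, hδ,
    cprod_append circ one hassoc hone]

theorem blockTerm_eq_of_boundaryFormula
    (hassoc : ∀ u v w : V, circ (circ u v) w = circ u (circ v w))
    (hunit : ∀ v : V, circ one v = v ∧ circ v one = v)
    {x z : Σ i : ℤ, 𝒜 i} {q : List (Σ i : ℤ, 𝒜 i)}
    (hm : m (toV 𝒜 (x :: (q ++ [z]))) = boundaryFormula circ one δ x z q)
    (p s : List (Σ i : ℤ, 𝒜 i)) :
    blockTerm circ one m p (x :: (q ++ [z])) s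
      = blockTerm circ one (δ ∘ cprod circ one) p (x :: (q ++ [z])) s
        - blockTerm circ one (δ ∘ cprod circ one) p (x :: q) (z :: s)
        - blockTerm circ one (δ ∘ cprod circ one) (p ++ [x]) (q ++ [z]) s
        + blockTerm circ one (δ ∘ cprod circ one) (p ++ [x]) q (z :: s) := by
  have hK : (-1 : K) ≠ 0 := by norm_num
  simp only [blockTerm]
  rw [hm]
  simp only [boundaryFormula, Function.comp_apply, toV_nil, toV_cons, toV_append,
    cprod_append circ one hassoc (fun v => (hunit v).1), cprod, (hunit _).2,
    map_sub, map_add, map_smul, LinearMap.sub_apply, LinearMap.add_apply, LinearMap.smul_apply,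
    smul_sub, smul_add, smul_smul, hassoc, degsum_append, degsum_cons, degsum_nil, add_zero,
    zpow_add₀ hK]

theorem blockAt_eq_mixed_diff (hassoc : ∀ u v w : V, circ (circ u v) w = circ u (circ v w))
    (hunit : ∀ v : V, circ one v = v ∧ circ v one = v) (hδ : δ one = 0)
    (hm1 : ∀ v : V, m [v] = δ v) {l : List (Σ i : ℤ, 𝒜 i)}
    (hclosed : ∀ x z q, q.length + 2 < l.length →
      m (toV 𝒜 (x :: (q ++ [z]))) = boundaryFormula circ one δ x z q)
    {i s : ℕ} (hi : i + s + 1 ≤ l.length) (hs : s + 1 < l.length) :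
    blockAt circ one m l i (i + s + 1)
      = blockAt circ one (δ ∘ cprod circ one) l i (i + s + 1)
        - blockAt circ one (δ ∘ cprod circ one) l i (i + s)
        - blockAt circ one (δ ∘ cprod circ one) l (i + 1) (i + s + 1)
        + blockAt circ one (δ ∘ cprod circ one) l (i + 1) (i + s) := by
  obtain ⟨p, b, t, rfl, rfl, hb⟩ := List.exists_eq_append_append (r := s + 1) hi
  cases s with
  | zero =>
    obtain ⟨a, rfl⟩ := List.length_eq_one_iff.mp hb
    have hblock (f : List V → V) := blockAt_eq_blockTerm circ one f (l := p ++ [a] ++ t)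
      (i := p.length) (j := p.length + 0 + 1) rfl rfl rfl
    have hzero : ∀ i j, j ≤ i → blockAt circ one (δ ∘ cprod circ one) (p ++ [a] ++ t) i j = 0 :=
      fun _ _ => blockAt_eq_zero_of_le hassoc (fun v => (hunit v).1) hδ _
    rw [hblock m, hblock, hzero p.length _ (by omega),
      hzero (p.length + 1) (p.length + 0 + 1) le_rfl, hzero (p.length + 1) _ (by omega)]
    simp [blockTerm, hm1, cprod, (hunit _).2]
  | succ s =>
    obtain ⟨x, q, z, rfl, rfl⟩ := List.exists_eq_cons_append_singleton hb
    rw [blockAt_eq_blockTerm circ one m rfl rfl (by grind),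
      blockAt_eq_blockTerm circ one _ rfl rfl (by grind),
      blockAt_eq_blockTerm circ one _ (p := p) (b := x :: q) (s := z :: t) (by grind) rfl
        (by grind),
      blockAt_eq_blockTerm circ one _ (p := p ++ [x]) (b := q ++ [z]) (s := t) (by grind)
        (by grind) (by grind),
      blockAt_eq_blockTerm circ one _ (p := p ++ [x]) (b := q) (s := z :: t) (by grind)
        (by grind) (by grind)]
    exact blockTerm_eq_of_boundaryFormula hassoc hunit (hclosed x z q (by simp at hs ⊢; omega)) p t

theorem m_eq_boundaryFormula (hassoc : ∀ u v w : V, circ (circ u v) w = circ u (circ v w))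
    (hunit : ∀ v : V, circ one v = v ∧ circ v one = v) (hδ : δ one = 0)
    (hm1 : ∀ v : V, m [v] = δ v)
    (hmrec : ∀ l : List (Σ i : ℤ, 𝒜 i), 2 ≤ l.length →
      m (toV 𝒜 l)
        = δ (cprod circ one (toV 𝒜 l))
          - ∑ k ∈ Finset.Icc 2 l.length, ∑ i ∈ Finset.range k,
              ((-1 : K) ^ degsum 𝒜 (l.take i)) •
                cprod circ one
                  ((toV 𝒜 l).take i
                    ++ m (((toV 𝒜 l).drop i).take (l.length - k + 1))
                      :: (toV 𝒜 l).drop (i + (l.length - k + 1))))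
    (x z : Σ i : ℤ, 𝒜 i) (mid : List (Σ i : ℤ, 𝒜 i)) :
    m (toV 𝒜 (x :: (mid ++ [z]))) = boundaryFormula circ one δ x z mid := by
  induction hn : mid.length using Nat.strong_induction_on generalizing x z mid with
  | _ n ih =>
  set l := x :: (mid ++ [z])
  have hlen : l.length = n + 2 := by simp [l, hn]
  set F := blockAt circ one (δ ∘ cprod circ one) l
  have hterm : ∀ k ∈ Finset.Icc 2 l.length, ∀ i ∈ Finset.range k,
      (-1 : K) ^ degsum 𝒜 (l.take i) • cprod circ one ((toV 𝒜 l).take i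
          ++ m (((toV 𝒜 l).drop i).take (l.length - k + 1))
            :: (toV 𝒜 l).drop (i + (l.length - k + 1)))
        = F i (i + (l.length - k) + 1) - F i (i + (l.length - k))
          - F (i + 1) (i + (l.length - k) + 1) + F (i + 1) (i + (l.length - k)) := by
    intro k hk i hi
    rw [Finset.mem_Icc] at hk
    rw [Finset.mem_range] at hi
    rw [← blockAt_add, ← add_assoc]
    exact blockAt_eq_mixed_diff hassoc hunit hδ hm1
      (fun x' z' q hq => ih q.length (by omega) x' z' q rfl) (by omega) (by omega)
  rw [hmrec l (by omega), Finset.sum_congr rfl fun k hk => Finset.sum_congr rfl (hterm k hk),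
    Finset.sum_Icc_sum_range_mixed_diff F
      (fun _ _ => blockAt_eq_zero_of_le hassoc (fun v => (hunit v).1) hδ l) _ (by omega)]
  have hF₀ : F 0 (l.length - 1) = blockTerm circ one (δ ∘ cprod circ one) [] (x :: mid) [z] :=
    blockAt_eq_blockTerm circ one _ (by simp [l]) rfl (by simp [l])
  have hF₁ : F 1 l.length = blockTerm circ one (δ ∘ cprod circ one) [x] (mid ++ [z]) [] :=
    blockAt_eq_blockTerm circ one _ (by simp [l]) rfl (by simp [l]; omega)
  have hF₂ : F 1 (l.length - 1) = blockTerm circ one (δ ∘ cprod circ one) [x] mid [z] :=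
    blockAt_eq_blockTerm circ one _ (by simp [l]) rfl (by simp [l]; omega)
  rw [hF₀, hF₁, hF₂]
  simp only [l, blockTerm, boundaryFormula, toV_nil, toV_cons, toV_append, cprod, degsum_nil,
    degsum_cons, add_zero, zpow_zero, one_smul, Function.comp_apply, List.nil_append,
    List.cons_append, (hunit _).2]
  abel

end Blocks

end Paper

theorem stmt18_general (K V : Type*) [Field K] [AddCommGroup V] [Module K V]
    (𝒜 : ℤ → Submodule K V)
    (bullet circ : V →ₗ[K] V →ₗ[K] V) (one : V) (δ : V →ₗ[K] V)
    -- a 2-associative differential algebra structure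
    (hcassoc : ∀ u v w : V, circ (circ u v) w = circ u (circ v w))
    (hbunit : ∀ v : V, bullet one v = v ∧ bullet v one = v)
    (hcunit : ∀ v : V, circ one v = v ∧ circ v one = v)
    (hone : one ∈ 𝒜 0)
    (hderiv : ∀ (i : ℤ), ∀ x ∈ 𝒜 i, ∀ y : V,
      δ (bullet x y) = bullet (δ x) y + ((-1 : K) ^ i) • bullet x (δ y))
    -- the family (m_n) and its recursive definition on homogeneous elements
    (m : List V → V)
    (hm1 : ∀ v : V, m [v] = δ v)
    (hmrec : ∀ l : List (Σ i : ℤ, 𝒜 i), 2 ≤ l.length →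
      m (toV 𝒜 l)
        = δ (cprod circ one (toV 𝒜 l))
          - ∑ k ∈ Finset.Icc 2 l.length, ∑ i ∈ Finset.range k,
              ((-1 : K) ^ degsum 𝒜 (l.take i)) •
                cprod circ one
                  ((toV 𝒜 l).take i
                    ++ m (((toV 𝒜 l).drop i).take (l.length - k + 1))
                      :: (toV 𝒜 l).drop (i + (l.length - k + 1)))) :
    -- the closed formula for n ≥ 4
    ∀ (x z : Σ i : ℤ, 𝒜 i) (mid : List (Σ i : ℤ, 𝒜 i)), 2 ≤ mid.length →
      ∀ l : List (Σ i : ℤ, 𝒜 i), l = x :: (mid ++ [z]) →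
        m (toV 𝒜 l)
          = δ (cprod circ one (toV 𝒜 l))
            - circ (δ (cprod circ one (toV 𝒜 (x :: mid)))) (z.2 : V)
            - ((-1 : K) ^ x.1) •
                circ (x.2 : V) (δ (cprod circ one (toV 𝒜 (mid ++ [z]))))
            + ((-1 : K) ^ x.1) •
                circ (x.2 : V) (circ (δ (cprod circ one (toV 𝒜 mid))) (z.2 : V)) := by
  rintro x z mid - l rfl
  have hδ : δ one = 0 := by
    simpa only [(hbunit _).1, (hbunit _).2, zpow_zero, one_smul, left_eq_add]
      using hderiv 0 one hone one
  exact m_eq_boundaryFormula hcassoc hcunit hδ hm1 hmrec x z mid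

/-- In a 2-associative differential algebra `(V, •, ∘, 1, ∂)`, Börjeson's
higher products `m_n`, defined by `m₁ = ∂` and the recursion
`m_n = ∂∘^{(n−1)} − Σ_{k=2}^n ∘^{(k−1)} Σ_{i+1+j=k} id^{⊗i} ⊗ m_{n−i−j} ⊗ id^{⊗j}`
(with Koszul signs), are given for `n ≥ 4` on homogeneous elements by
`m_n(v₁⊗⋯⊗vₙ) = ∂(v₁∘⋯∘vₙ) − ∂(v₁∘⋯∘v_{n−1})∘vₙ − (−1)^{|v₁|}v₁∘∂(v₂∘⋯∘vₙ)
 + (−1)^{|v₁|}v₁∘∂(v₂∘⋯∘v_{n−1})∘vₙ`. -/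
theorem stmt18 (K V : Type*) [Field K] [AddCommGroup V] [Module K V]
    (𝒜 : ℤ → Submodule K V) [DirectSum.Decomposition 𝒜]
    (bullet circ : V →ₗ[K] V →ₗ[K] V) (one : V) (δ : V →ₗ[K] V)
    -- a 2-associative differential algebra structure
    (hbassoc : ∀ u v w : V, bullet (bullet u v) w = bullet u (bullet v w))
    (hcassoc : ∀ u v w : V, circ (circ u v) w = circ u (circ v w))
    (hbunit : ∀ v : V, bullet one v = v ∧ bullet v one = v)
    (hcunit : ∀ v : V, circ one v = v ∧ circ v one = v)
    (hone : one ∈ 𝒜 0)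
    (hbdeg : ∀ (i j : ℤ) (v w : V), v ∈ 𝒜 i → w ∈ 𝒜 j → bullet v w ∈ 𝒜 (i + j))
    (hcdeg : ∀ (i j : ℤ) (v w : V), v ∈ 𝒜 i → w ∈ 𝒜 j → circ v w ∈ 𝒜 (i + j))
    (hδdeg : ∀ (i : ℤ), ∀ v ∈ 𝒜 i, δ v ∈ 𝒜 (i - 1))
    (hδ2 : δ ∘ₗ δ = 0)
    (hderiv : ∀ (i : ℤ), ∀ x ∈ 𝒜 i, ∀ y : V,
      δ (bullet x y) = bullet (δ x) y + ((-1 : K) ^ i) • bullet x (δ y))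
    -- the family (m_n) and its recursive definition on homogeneous elements
    (m : List V → V)
    (hm1 : ∀ v : V, m [v] = δ v)
    (hmrec : ∀ l : List (Σ i : ℤ, 𝒜 i), 2 ≤ l.length →
      m (toV 𝒜 l)
        = δ (cprod circ one (toV 𝒜 l))
          - ∑ k ∈ Finset.Icc 2 l.length, ∑ i ∈ Finset.range k,
              ((-1 : K) ^ degsum 𝒜 (l.take i)) •
                cprod circ one
                  ((toV 𝒜 l).take i
                    ++ m (((toV 𝒜 l).drop i).take (l.length - k + 1))
                      :: (toV 𝒜 l).drop (i + (l.length - k + 1)))) :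
    -- the closed formula for n ≥ 4
    ∀ (x z : Σ i : ℤ, 𝒜 i) (mid : List (Σ i : ℤ, 𝒜 i)), 2 ≤ mid.length →
      ∀ l : List (Σ i : ℤ, 𝒜 i), l = x :: (mid ++ [z]) →
        m (toV 𝒜 l)
          = δ (cprod circ one (toV 𝒜 l))
            - circ (δ (cprod circ one (toV 𝒜 (x :: mid)))) (z.2 : V)
            - ((-1 : K) ^ x.1) •
                circ (x.2 : V) (δ (cprod circ one (toV 𝒜 (mid ++ [z]))))
            + ((-1 : K) ^ x.1) •
                circ (x.2 : V) (circ (δ (cprod circ one (toV 𝒜 mid))) (z.2 : V)) :=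
  stmt18_general K V 𝒜 bullet circ one δ hcassoc hbunit hcunit hone hderiv m hm1 hmrec
end
end

section
/- Let (V, •, ∘, 1, ∂) be a 2-associative differential algebra and define m_n: V^{⊗n} → V by the recursion m_1 = ∂, m_n = ∂∘^{(n−1)} − Σ_{k=2}^n ∘^{(k−1)}(Σ_{i+1+j=k} id^{⊗i} ⊗ m_{n−i−j} ⊗ id^{⊗j}). Then the family (m_n)_{n≥1} satisfies the (shifted) A_∞ relations: for every n ≥ 1, Σ_{i,j≥0, i+j<n} m_{i+1+j}(id^{⊗i} ⊗ m_{n−i−j} ⊗ id^{⊗j}) = 0 as maps V^{⊗n} → V (with Koszul signs on elements). -/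
noncomputable section

open Paper

/-!
Let `d` be the coderivation of the tensor coalgebra with components `m_n` and `τ` the iterated
`∘`-product. Börjeson's recursion says exactly that `τ ∘ d = ∂ ∘ τ` on nonempty words
(`coderiv_cprod`), hence `τ ∘ d ∘ d = ∂² ∘ τ = 0`. In `d ∘ d` the terms in which the two `m`'s
act on disjoint blocks cancel in pairs because of the Koszul sign, so `τ ∘ d ∘ d` is a sum of
words carrying one A∞ expression `m ∘ d` of a subword. By induction on the length all of these
vanish except the one for the whole word, which is therefore zero too.
-/

namespace Borjeson

open Finset

section Collapse

variable {α : Type*}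

def middle (l : List α) (i j : ℕ) : List α := (l.drop i).take (l.length - i - j)

def collapse (f : List α → α) (l : List α) (i j : ℕ) : List α :=
  l.take i ++ f (middle l i j) :: l.drop (l.length - j)

variable (f g : List α → α) {l : List α} {i j : ℕ}

theorem take_append_middle_append_drop (h : i + j ≤ l.length) :
    l.take i ++ middle l i j ++ l.drop (l.length - j) = l := by
  conv_rhs =>
    rw [← List.take_append_drop i l, ← List.take_append_drop (l.length - i - j) (l.drop i)]
  rw [List.drop_drop, List.append_assoc, middle]
  congr 3
  omega

theorem exists_eq_append_append (h : i + j ≤ l.length) :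
    ∃ a b c, l = a ++ b ++ c ∧ a.length = i ∧ c.length = j :=
  ⟨_, _, _, (take_append_middle_append_drop h).symm, by simp; omega, by simp; omega⟩

theorem middle_append_append (a b c : List α) : middle (a ++ b ++ c) a.length c.length = b := by
  simp [middle]

theorem collapse_append_append (a b c : List α) :
    collapse f (a ++ b ++ c) a.length c.length = a ++ f b :: c := by
  have hc : (a ++ b ++ c).length - c.length = (a ++ b).length := by simp; omega
  rw [collapse, middle_append_append, hc, List.drop_left, List.append_assoc, List.take_left]

theorem collapse_eq {a b c : List α} (hl : l = a ++ b ++ c) (ha : a.length = i)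
    (hc : c.length = j) :
    collapse f l i j = a ++ f b :: c := by
  subst hl ha hc
  exact collapse_append_append f a b c

theorem length_middle : (middle l i j).length = l.length - i - j := by
  simp [middle]

theorem length_collapse (h : i + j ≤ l.length) : (collapse f l i j).length = i + 1 + j := by
  simp [collapse]
  omega

theorem collapse_ne_nil : collapse f l i j ≠ [] := by simp [collapse]

theorem collapse_zero_zero : collapse f l 0 0 = [f l] := by simp [collapse, middle]

theorem take_collapse_of_le {p : ℕ} (hp : p ≤ i) (hi : i ≤ l.length) :
    (collapse f l i j).take p = l.take p := by
  rw [collapse, List.take_append_of_le_length (by simp; omega), List.take_take, min_eq_left hp]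

theorem take_append_middle (h : i + j ≤ l.length) :
    l.take i ++ middle l i j = l.take (l.length - j) := by
  conv_rhs => rw [← take_append_middle_append_drop h]
  rw [List.take_left' (by simp [length_middle]; omega)]

theorem take_eq_take_append_take_middle {p q : ℕ} (hp : p ≤ i) (hiq : i + q ≤ l.length) :
    l.take i = l.take p ++ (middle l p q).take (i - p) := by
  rw [middle, List.take_take, min_eq_left (by omega), ← List.take_add,
    Nat.add_sub_cancel' hp]

theorem take_collapse_of_lt {p : ℕ} (hij : i + j ≤ l.length) (hp : i < p) :
    (collapse f l i j).take p
      = l.take i ++ f (middle l i j) :: (l.drop (l.length - j)).take (p - i - 1) := by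
  obtain ⟨k, rfl⟩ : ∃ k, p = i + 1 + k := ⟨p - i - 1, by omega⟩
  have hi : (l.take i).length = i := by simp; omega
  rw [collapse, ← List.singleton_append, ← List.append_assoc, List.take_append,
    List.take_of_length_le (by simp; omega)]
  simp [hi, show i + 1 + k - i - 1 = k by omega, show i + 1 + k - (i + 1) = k by omega]

theorem collapse_collapse_of_le {p q : ℕ} (hij : i + j ≤ l.length) (hp : p ≤ i)
    (hq : q ≤ j) :
    collapse g (collapse f l i j) p q
      = collapse (fun w => g (collapse f w (i - p) (j - q))) l p q := by
  obtain ⟨a, b, c, rfl, rfl, rfl⟩ := exists_eq_append_append hij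
  obtain ⟨a₁, a₂, rfl, rfl⟩ : ∃ a₁ a₂, a = a₁ ++ a₂ ∧ a₁.length = p :=
    ⟨a.take p, a.drop p, (List.take_append_drop p a).symm, by simp; omega⟩
  obtain ⟨c₁, c₂, rfl, rfl⟩ : ∃ c₁ c₂, c = c₁ ++ c₂ ∧ c₂.length = q :=
    ⟨c.take (c.length - q), c.drop (c.length - q), (List.take_append_drop _ c).symm,
      by simp; omega⟩
  rw [collapse_append_append,
    collapse_eq g (a := a₁) (b := a₂ ++ f b :: c₁) (by simp) rfl rfl,
    collapse_eq _ (a := a₁) (b := a₂ ++ b ++ c₁) (by simp) rfl rfl,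
    collapse_eq f (a := a₂) (b := b) (c := c₁) rfl (by simp) (by simp)]

theorem collapse_collapse_of_lt {p q : ℕ} (hij : i + j ≤ l.length) (hpq : p + q ≤ i + j)
    (hip : i < p) :
    collapse g (collapse f l i j) p q
      = collapse f (collapse g l (l.length - j + p - i - 1) q) i (p + q - i) := by
  obtain ⟨a, b, r, rfl, rfl, rfl⟩ := exists_eq_append_append hij
  obtain ⟨c, d, e, rfl, hc, rfl⟩ := exists_eq_append_append (l := r) (i := p - a.length - 1)
    (j := q) (by omega)
  obtain rfl : p = a.length + 1 + c.length := by omega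
  rw [collapse_append_append,
    collapse_eq g (a := a ++ f b :: c) (b := d) (c := e) (by simp) (by simp; omega) rfl,
    collapse_eq g (a := a ++ b ++ c) (b := d) (c := e) (by simp) (by simp; omega) rfl,
    collapse_eq f (a := a) (b := b) (c := c ++ g d :: e) (by simp) rfl (by simp; omega)]
  simp

end Collapse

section Signs

variable {K : Type*} [Field K]

theorem neg_one_zpow_add_mul_self (s t : ℤ) :
    (-1 : K) ^ (s + t) * (-1 : K) ^ s = (-1 : K) ^ t := by
  rw [zpow_add₀ (by norm_num), mul_right_comm, ← zpow_add₀ (by norm_num), ← two_mul, zpow_mul]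
  norm_num

theorem neg_one_zpow_sub_one (s : ℤ) : (-1 : K) ^ (s - 1) = -(-1 : K) ^ s := by
  rw [zpow_sub_one₀ (by norm_num)]
  simp

end Signs

section Pairs

def pairsSumLt (n : ℕ) : Finset (ℕ × ℕ) := (range n ×ˢ range n).filter fun p => p.1 + p.2 < n

@[simp] theorem mem_pairsSumLt {n : ℕ} {p : ℕ × ℕ} : p ∈ pairsSumLt n ↔ p.1 + p.2 < n := by
  simp only [pairsSumLt, mem_filter, mem_product, mem_range]
  omega

theorem zero_mem_pairsSumLt {n : ℕ} (hn : n ≠ 0) : ((0, 0) : ℕ × ℕ) ∈ pairsSumLt n := by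
  simp; omega

theorem sum_pairsSumLt {M : Type*} [AddCommMonoid M] (n : ℕ) (f : ℕ × ℕ → M) :
    ∑ p ∈ pairsSumLt n, f p = ∑ i ∈ range n, ∑ j ∈ range (n - i), f (i, j) :=
  sum_finset_product _ _ _ fun p => by simp; omega

theorem sum_Icc_sum_range_eq_sum_pairsSumLt_erase {M : Type*} [AddCommMonoid M] (n : ℕ)
    (f : ℕ × ℕ → M) :
    ∑ k ∈ Icc 2 n, ∑ i ∈ range k, f (i, k - 1 - i) = ∑ p ∈ (pairsSumLt n).erase (0, 0), f p := by
  rw [sum_sigma']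
  refine sum_nbij' (fun x => (x.2, x.1 - 1 - x.2)) (fun p => ⟨p.1 + p.2 + 1, p.1⟩)
    ?_ ?_ ?_ ?_ (fun _ _ => rfl)
  · rintro ⟨k, i⟩ h
    simp only [mem_sigma, mem_Icc, mem_range] at h
    simp only [mem_erase, ne_eq, Prod.ext_iff, mem_pairsSumLt]
    omega
  · rintro ⟨i, j⟩ h
    simp only [mem_erase, ne_eq, Prod.ext_iff, mem_pairsSumLt] at h
    simp only [mem_sigma, mem_Icc, mem_range]
    omega
  · rintro ⟨k, i⟩ h
    simp only [mem_sigma, mem_Icc, mem_range] at h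
    exact Sigma.ext (by simp only; omega) HEq.rfl
  · rintro ⟨i, j⟩ -
    simp

def pairsSumLt₂ (n : ℕ) : Finset ((ℕ × ℕ) × (ℕ × ℕ)) :=
  (pairsSumLt n ×ˢ pairsSumLt n).filter fun x => x.2.1 + x.2.2 < x.1.1 + 1 + x.1.2

@[simp] theorem mem_pairsSumLt₂ {n : ℕ} {x : (ℕ × ℕ) × (ℕ × ℕ)} :
    x ∈ pairsSumLt₂ n ↔ x.1.1 + x.1.2 < n ∧ x.2.1 + x.2.2 < x.1.1 + 1 + x.1.2 := by
  simp only [pairsSumLt₂, mem_filter, mem_product, mem_pairsSumLt]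
  omega

end Pairs

section Graded

variable {K V : Type*} [Field K] [AddCommGroup V] [Module K V] (𝒜 : ℤ → Submodule K V)

@[simp] theorem toV_nil : toV 𝒜 [] = [] := rfl

@[simp] theorem toV_cons (x : Σ i : ℤ, 𝒜 i) (l : List (Σ i : ℤ, 𝒜 i)) :
    toV 𝒜 (x :: l) = (x.2 : V) :: toV 𝒜 l := rfl

@[simp] theorem toV_append (a b : List (Σ i : ℤ, 𝒜 i)) :
    toV 𝒜 (a ++ b) = toV 𝒜 a ++ toV 𝒜 b := List.map_append

@[simp] theorem toV_take (l : List (Σ i : ℤ, 𝒜 i)) (k : ℕ) :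
    toV 𝒜 (l.take k) = (toV 𝒜 l).take k := List.map_take

@[simp] theorem toV_drop (l : List (Σ i : ℤ, 𝒜 i)) (k : ℕ) :
    toV 𝒜 (l.drop k) = (toV 𝒜 l).drop k := List.map_drop

@[simp] theorem length_toV (l : List (Σ i : ℤ, 𝒜 i)) : (toV 𝒜 l).length = l.length :=
  List.length_map _

theorem toV_middle (l : List (Σ i : ℤ, 𝒜 i)) (i j : ℕ) :
    toV 𝒜 (middle l i j) = middle (toV 𝒜 l) i j := by
  simp [middle]

@[simp] theorem degsum_nil : degsum 𝒜 [] = 0 := rfl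

@[simp] theorem degsum_cons (x : Σ i : ℤ, 𝒜 i) (l : List (Σ i : ℤ, 𝒜 i)) :
    degsum 𝒜 (x :: l) = x.1 + degsum 𝒜 l := by
  simp [degsum]

@[simp] theorem degsum_append (a b : List (Σ i : ℤ, 𝒜 i)) :
    degsum 𝒜 (a ++ b) = degsum 𝒜 a + degsum 𝒜 b := by
  simp [degsum]

variable (circ : V →ₗ[K] V →ₗ[K] V) (one : V)

theorem cprod_toV_mem (hone : one ∈ 𝒜 0)
    (hcirc : ∀ (i j : ℤ) (v w : V), v ∈ 𝒜 i → w ∈ 𝒜 j → circ v w ∈ 𝒜 (i + j))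
    (l : List (Σ i : ℤ, 𝒜 i)) : cprod circ one (toV 𝒜 l) ∈ 𝒜 (degsum 𝒜 l) := by
  induction l with
  | nil => exact hone
  | cons x l ih => simpa [cprod] using hcirc _ _ _ _ x.2.2 ih

def cprodSlot (L₂ : List V) : List V → V →ₗ[K] V
  | [] => circ.flip (cprod circ one L₂)
  | a :: L₁ => circ a ∘ₗ cprodSlot L₂ L₁

theorem cprodSlot_apply (L₁ L₂ : List V) (v : V) :
    cprodSlot circ one L₂ L₁ v = cprod circ one (L₁ ++ v :: L₂) := by
  induction L₁ with
  | nil => rfl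
  | cons a L₁ ih => simp [cprodSlot, cprod, ih]

end Graded

section HigherProducts

variable {K V : Type*} [Field K] [AddCommGroup V] [Module K V] (𝒜 : ℤ → Submodule K V)

variable (circ : V →ₗ[K] V →ₗ[K] V) (one : V) (δ : V →ₗ[K] V) (m : List V → V)

structure IsBorjesonProducts : Prop where
  one_mem : one ∈ 𝒜 0
  circ_mem : ∀ (i j : ℤ) (v w : V), v ∈ 𝒜 i → w ∈ 𝒜 j → circ v w ∈ 𝒜 (i + j)
  δ_mem : ∀ (i : ℤ), ∀ v ∈ 𝒜 i, δ v ∈ 𝒜 (i - 1)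
  m_singleton : ∀ v : V, m [v] = δ v
  m_rec : ∀ l : List (Σ i : ℤ, 𝒜 i), 2 ≤ l.length →
    m (toV 𝒜 l)
      = δ (cprod circ one (toV 𝒜 l))
        - ∑ k ∈ Finset.Icc 2 l.length, ∑ i ∈ Finset.range k,
            ((-1 : K) ^ degsum 𝒜 (l.take i)) •
              cprod circ one
                ((toV 𝒜 l).take i
                  ++ m (((toV 𝒜 l).drop i).take (l.length - k + 1))
                    :: (toV 𝒜 l).drop (i + (l.length - k + 1)))

open Classical in
/-- The value of `m` as a homogeneous element of degree `degsum l - 1`; the junk value `0` never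
occurs under `IsBorjesonProducts` (`coe_mHom`). -/
def mHom (l : List (Σ i : ℤ, 𝒜 i)) : Σ i : ℤ, 𝒜 i :=
  ⟨degsum 𝒜 l - 1, if h : m (toV 𝒜 l) ∈ 𝒜 (degsum 𝒜 l - 1) then ⟨_, h⟩ else 0⟩

variable {𝒜 m} {l : List (Σ i : ℤ, 𝒜 i)} {i j : ℕ}

theorem coe_mHom_of_mem (h : m (toV 𝒜 l) ∈ 𝒜 (degsum 𝒜 l - 1)) :
    ((mHom 𝒜 m l).2 : V) = m (toV 𝒜 l) := by
  simp [mHom, h]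

theorem degsum_collapse_mHom (h : i + j ≤ l.length) :
    degsum 𝒜 (collapse (mHom 𝒜 m) l i j) = degsum 𝒜 l - 1 := by
  conv_rhs => rw [← take_append_middle_append_drop h]
  simp only [collapse, mHom, degsum_append, degsum_cons]
  ring

theorem toV_collapse_mHom_of_mem
    (h : m (toV 𝒜 (middle l i j)) ∈ 𝒜 (degsum 𝒜 (middle l i j) - 1)) :
    toV 𝒜 (collapse (mHom 𝒜 m) l i j) = collapse m (toV 𝒜 l) i j := by
  simp [collapse, coe_mHom_of_mem h, toV_middle]

namespace IsBorjesonProducts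

variable {circ one δ}

theorem m_toV_eq (hm : IsBorjesonProducts 𝒜 circ one δ m) (hl : 2 ≤ l.length) :
    m (toV 𝒜 l) = δ (cprod circ one (toV 𝒜 l))
      - ∑ p ∈ (pairsSumLt l.length).erase (0, 0),
          (-1 : K) ^ degsum 𝒜 (l.take p.1)
            • cprod circ one (collapse m (toV 𝒜 l) p.1 p.2) := by
  rw [hm.m_rec l hl, ← sum_Icc_sum_range_eq_sum_pairsSumLt_erase]
  refine congrArg _ (sum_congr rfl fun k hk => sum_congr rfl fun i hi => ?_)
  simp only [mem_Icc, mem_range] at hk hi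
  simp only [collapse, middle, length_toV]
  rw [show l.length - i - (k - 1 - i) = l.length - k + 1 by omega,
    show l.length - (k - 1 - i) = i + (l.length - k + 1) by omega]

theorem m_toV_mem (hm : IsBorjesonProducts 𝒜 circ one δ m) (hl : l ≠ []) :
    m (toV 𝒜 l) ∈ 𝒜 (degsum 𝒜 l - 1) := by
  induction h : l.length using Nat.strong_induction_on generalizing l with
  | _ n ih =>
  match l, hl with
  | [x], _ => simpa [hm.m_singleton] using hm.δ_mem _ _ x.2.2
  | x :: y :: l, _ =>
    rw [hm.m_toV_eq (by simp)]
    refine sub_mem (hm.δ_mem _ _ (cprod_toV_mem 𝒜 circ one hm.one_mem hm.circ_mem _))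
      (sum_mem fun p hp => Submodule.smul_mem _ _ ?_)
    simp only [mem_erase, ne_eq, Prod.ext_iff, mem_pairsSumLt, List.length_cons] at hp h
    have hmid : m (toV 𝒜 (middle (x :: y :: l) p.1 p.2))
        ∈ 𝒜 (degsum 𝒜 (middle (x :: y :: l) p.1 p.2) - 1) :=
      ih _ (by simp [length_middle]; omega) (by simp [middle]; omega) rfl
    rw [← toV_collapse_mHom_of_mem hmid,
      ← degsum_collapse_mHom (m := m) (i := p.1) (j := p.2) (by simp; omega)]
    exact cprod_toV_mem 𝒜 circ one hm.one_mem hm.circ_mem _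

theorem coe_mHom (hm : IsBorjesonProducts 𝒜 circ one δ m) (hl : l ≠ []) :
    ((mHom 𝒜 m l).2 : V) = m (toV 𝒜 l) :=
  coe_mHom_of_mem (hm.m_toV_mem hl)

theorem toV_collapse_mHom (hm : IsBorjesonProducts 𝒜 circ one δ m) (h : i + j < l.length) :
    toV 𝒜 (collapse (mHom 𝒜 m) l i j) = collapse m (toV 𝒜 l) i j :=
  toV_collapse_mHom_of_mem (hm.m_toV_mem (by simp [middle]; omega))

end IsBorjesonProducts

end HigherProducts

section Coderivation

variable {K V W W' : Type*} [Field K] [AddCommGroup V] [Module K V] [AddCommGroup W]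
  [Module K W] [AddCommGroup W'] [Module K W'] (𝒜 : ℤ → Submodule K V) (m : List V → V)

/-- `coderiv 𝒜 m g` is `g ∘ d`, for `d` the coderivation of the tensor coalgebra with
components `m`, evaluated on homogeneous elements with Koszul signs. -/
def coderiv (g : List (Σ i : ℤ, 𝒜 i) → W) (l : List (Σ i : ℤ, 𝒜 i)) : W :=
  ∑ p ∈ pairsSumLt l.length,
    (-1 : K) ^ degsum 𝒜 (l.take p.1) • g (collapse (mHom 𝒜 m) l p.1 p.2)

variable {𝒜 m}

theorem coderiv_congr {g g' : List (Σ i : ℤ, 𝒜 i) → W} (h : ∀ w, w ≠ [] → g w = g' w)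
    (l : List (Σ i : ℤ, 𝒜 i)) : coderiv 𝒜 m g l = coderiv 𝒜 m g' l :=
  sum_congr rfl fun _ _ => by rw [h _ (collapse_ne_nil _)]

theorem map_coderiv (φ : W →ₗ[K] W') (g : List (Σ i : ℤ, 𝒜 i) → W)
    (l : List (Σ i : ℤ, 𝒜 i)) :
    φ (coderiv 𝒜 m g l) = coderiv 𝒜 m (φ ∘ g) l := by
  simp [coderiv, map_sum]

theorem IsBorjesonProducts.coderiv_cprod {circ : V →ₗ[K] V →ₗ[K] V} {one : V}
    {δ : V →ₗ[K] V} (hm : IsBorjesonProducts 𝒜 circ one δ m) (hunit : ∀ v, circ v one = v)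
    {l : List (Σ i : ℤ, 𝒜 i)} (hl : l ≠ []) :
    coderiv 𝒜 m (fun w => cprod circ one (toV 𝒜 w)) l = δ (cprod circ one (toV 𝒜 l)) := by
  have hn : l.length ≠ 0 := by simpa using hl
  rw [coderiv, ← add_sum_erase _ _ (zero_mem_pairsSumLt hn)]
  simp only [List.take_zero, degsum_nil, zpow_zero, one_smul, collapse_zero_zero, toV_cons,
    toV_nil, hm.coe_mHom hl, cprod, hunit]
  match l, hl with
  | [x], _ =>
    have : (pairsSumLt 1).erase (0, 0) = ∅ := by
      ext p
      simp [Prod.ext_iff]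
    simp [this, hm.m_singleton, cprod, hunit]
  | x :: y :: l, _ =>
    rw [hm.m_toV_eq (by simp), sub_add, sub_eq_self, sub_eq_zero]
    refine sum_congr rfl fun p hp => ?_
    rw [hm.toV_collapse_mHom (by simp only [mem_erase, mem_pairsSumLt] at hp; exact hp.2)]

variable (𝒜 m) in
def coderivTerm₂ (g : List (Σ i : ℤ, 𝒜 i) → W) (l : List (Σ i : ℤ, 𝒜 i))
    (x : (ℕ × ℕ) × (ℕ × ℕ)) : W :=
  ((-1 : K) ^ degsum 𝒜 (l.take x.1.1)
      * (-1 : K) ^ degsum 𝒜 ((collapse (mHom 𝒜 m) l x.1.1 x.1.2).take x.2.1)) •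
    g (collapse (mHom 𝒜 m) (collapse (mHom 𝒜 m) l x.1.1 x.1.2) x.2.1 x.2.2)

variable {g : List (Σ i : ℤ, 𝒜 i) → W} {l : List (Σ i : ℤ, 𝒜 i)} {i j p q : ℕ}

theorem coderiv_coderiv_eq_sum_coderivTerm₂ :
    coderiv 𝒜 m (coderiv 𝒜 m g) l
      = ∑ x ∈ pairsSumLt₂ l.length, coderivTerm₂ 𝒜 m g l x := by
  rw [sum_finset_product _ (pairsSumLt l.length) fun p => pairsSumLt (p.1 + 1 + p.2)]
  · refine sum_congr rfl fun p hp => ?_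
    rw [coderiv, length_collapse _ (by simp at hp; omega), smul_sum]
    simp [coderivTerm₂, smul_smul]
  · intro x
    simp only [mem_pairsSumLt₂, mem_pairsSumLt]

theorem coderivTerm₂_of_le (hij : i + j < l.length) (hp : p ≤ i) (hq : q ≤ j) :
    coderivTerm₂ 𝒜 m g l ((i, j), (p, q))
      = (-1 : K) ^ degsum 𝒜 ((middle l p q).take (i - p))
          • g (collapse (fun w => mHom 𝒜 m (collapse (mHom 𝒜 m) w (i - p) (j - q))) l p q) := by
  rw [coderivTerm₂, collapse_collapse_of_le _ _ hij.le hp hq,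
    take_collapse_of_le _ hp (by omega),
    take_eq_take_append_take_middle (q := q) hp (by omega), degsum_append,
    neg_one_zpow_add_mul_self]

theorem coderivTerm₂_of_lt (hij : i + j < l.length) (hpq : p + q < i + 1 + j) (hip : i < p) :
    coderivTerm₂ 𝒜 m g l ((i, j), (p, q))
      = -coderivTerm₂ 𝒜 m g l ((l.length - j + p - i - 1, q), (i, p + q - i)) := by
  have hI : l.length - j + p - i - 1 = l.length - j + (p - i - 1) := by omega
  simp only [coderivTerm₂]
  rw [collapse_collapse_of_lt _ _ hij.le (by omega) hip, take_collapse_of_lt _ hij.le hip,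
    take_collapse_of_le _ (by omega) (by omega), hI, List.take_add,
    ← take_append_middle hij.le, ← neg_smul]
  congr 1
  simp only [degsum_append, degsum_cons, mHom]
  rw [show ∀ a b c : ℤ, a + (b - 1 + c) = a + b + c - 1 from fun _ _ _ => by ring,
    neg_one_zpow_sub_one, mul_neg, mul_comm]

theorem sum_coderivTerm₂_filter_not_le :
    ∑ x ∈ (pairsSumLt₂ l.length).filter (fun x => ¬(x.2.1 ≤ x.1.1 ∧ x.2.2 ≤ x.1.2)),
      coderivTerm₂ 𝒜 m g l x = 0 := by
  rw [← sum_filter_add_sum_filter_not _ (fun x => x.1.1 < x.2.1), filter_filter, filter_filter,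
    add_eq_zero_iff_eq_neg, ← sum_neg_distrib]
  refine sum_nbij'
    (fun x => ((l.length - x.1.2 + x.2.1 - x.1.1 - 1, x.2.2), (x.1.1, x.2.1 + x.2.2 - x.1.1)))
    (fun y => ((y.2.1, l.length - y.1.1 - y.1.2 + y.2.2 - 1), (y.2.1 + y.2.2 - y.1.2, y.1.2)))
    ?_ ?_ ?_ ?_ ?_ <;> rintro ⟨⟨i, j⟩, p, q⟩ hx <;>
    simp only [mem_filter, mem_pairsSumLt₂] at hx
  any_goals (simp only [mem_filter, mem_pairsSumLt₂, Prod.mk.injEq, and_true, true_and]; omega)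
  refine coderivTerm₂_of_lt ?_ ?_ ?_ <;> omega

theorem sum_coderivTerm₂_filter_le :
    ∑ x ∈ (pairsSumLt₂ l.length).filter (fun x => x.2.1 ≤ x.1.1 ∧ x.2.2 ≤ x.1.2),
      coderivTerm₂ 𝒜 m g l x
      = ∑ p ∈ pairsSumLt l.length,
          coderiv 𝒜 m (fun w => g (l.take p.1 ++ mHom 𝒜 m w :: l.drop (l.length - p.2)))
            (middle l p.1 p.2) := by
  have hsum : ∀ p ∈ pairsSumLt l.length,
      coderiv 𝒜 m (fun w => g (l.take p.1 ++ mHom 𝒜 m w :: l.drop (l.length - p.2)))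
        (middle l p.1 p.2)
      = ∑ q ∈ pairsSumLt (l.length - p.1 - p.2),
          (-1 : K) ^ degsum 𝒜 ((middle l p.1 p.2).take q.1)
            • g (collapse (fun w => mHom 𝒜 m (collapse (mHom 𝒜 m) w q.1 q.2)) l p.1 p.2) :=
    fun p _ => by rw [coderiv, length_middle]; rfl
  rw [sum_congr rfl hsum, ← sum_finset_product
    ((pairsSumLt l.length ×ˢ pairsSumLt l.length).filter
      fun y => y.2.1 + y.2.2 < l.length - y.1.1 - y.1.2) _ _
    (fun y => by simp only [mem_filter, mem_product, mem_pairsSumLt]; omega)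
    (f := fun y => (-1 : K) ^ degsum 𝒜 ((middle l y.1.1 y.1.2).take y.2.1)
      • g (collapse (fun w => mHom 𝒜 m (collapse (mHom 𝒜 m) w y.2.1 y.2.2)) l y.1.1 y.1.2))]
  refine sum_nbij' (fun x => (x.2, (x.1.1 - x.2.1, x.1.2 - x.2.2)))
    (fun y => ((y.1.1 + y.2.1, y.1.2 + y.2.2), y.1)) ?_ ?_ ?_ ?_ ?_ <;>
    rintro ⟨⟨i, j⟩, p, q⟩ hx <;>
    simp only [mem_filter, mem_pairsSumLt₂, mem_product, mem_pairsSumLt] at hx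
  any_goals
    (simp only [mem_filter, mem_pairsSumLt₂, mem_product, mem_pairsSumLt, Prod.mk.injEq,
      and_true, true_and]; omega)
  refine coderivTerm₂_of_le ?_ ?_ ?_ <;> omega

variable (g l) in
/-- `d ∘ d` is again a coderivation: only the terms where the second `m` absorbs the first
survive, the others cancelling in pairs. -/
theorem coderiv_coderiv :
    coderiv 𝒜 m (coderiv 𝒜 m g) l
      = ∑ p ∈ pairsSumLt l.length,
          coderiv 𝒜 m (fun w => g (l.take p.1 ++ mHom 𝒜 m w :: l.drop (l.length - p.2)))
            (middle l p.1 p.2) := by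
  rw [coderiv_coderiv_eq_sum_coderivTerm₂,
    ← sum_filter_add_sum_filter_not _ fun x => x.2.1 ≤ x.1.1 ∧ x.2.2 ≤ x.1.2,
    sum_coderivTerm₂_filter_not_le, add_zero, sum_coderivTerm₂_filter_le]

end Coderivation

theorem IsBorjesonProducts.coderiv_m_eq_zero {K V : Type*} [Field K] [AddCommGroup V]
    [Module K V] {𝒜 : ℤ → Submodule K V} {circ : V →ₗ[K] V →ₗ[K] V} {one : V}
    {δ : V →ₗ[K] V} {m : List V → V} (hm : IsBorjesonProducts 𝒜 circ one δ m)
    (hunit : ∀ v, circ v one = v) (hδ : δ ∘ₗ δ = 0) {l : List (Σ i : ℤ, 𝒜 i)} (hl : l ≠ []) :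
    coderiv 𝒜 m (fun w => m (toV 𝒜 w)) l = 0 := by
  induction h : l.length using Nat.strong_induction_on generalizing l with
  | _ n ih =>
  subst h
  set τ := fun w : List (Σ i : ℤ, 𝒜 i) => cprod circ one (toV 𝒜 w)
  have hτ : coderiv 𝒜 m (coderiv 𝒜 m τ) l = 0 := by
    rw [coderiv_congr (fun w hw => hm.coderiv_cprod hunit hw)]
    refine (map_coderiv δ τ l).symm.trans ?_
    rw [hm.coderiv_cprod hunit hl]
    exact LinearMap.congr_fun hδ _
  have hslot : ∀ p ∈ pairsSumLt l.length,
      coderiv 𝒜 m (fun w => τ (l.take p.1 ++ mHom 𝒜 m w :: l.drop (l.length - p.2)))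
        (middle l p.1 p.2)
      = cprodSlot circ one (toV 𝒜 (l.drop (l.length - p.2))) (toV 𝒜 (l.take p.1))
          (coderiv 𝒜 m (fun w => m (toV 𝒜 w)) (middle l p.1 p.2)) := fun p _ => by
    rw [map_coderiv]
    refine coderiv_congr (fun w hw => ?_) _
    simp [τ, cprodSlot_apply, hm.coe_mHom hw]
  have hvanish : ∀ p ∈ (pairsSumLt l.length).erase (0, 0),
      coderiv 𝒜 m (fun w => m (toV 𝒜 w)) (middle l p.1 p.2) = 0 := fun p hp => by
    simp only [mem_erase, ne_eq, Prod.ext_iff, mem_pairsSumLt] at hp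
    exact ih _ (by rw [length_middle]; omega) (by simp [middle]; omega) rfl
  rw [coderiv_coderiv, sum_congr rfl hslot,
    ← add_sum_erase _ _ (zero_mem_pairsSumLt (by simpa using hl)),
    sum_eq_zero fun p hp => by rw [hvanish p hp, map_zero]] at hτ
  simpa [cprodSlot, cprod, hunit, middle] using hτ

end Borjeson

theorem stmt19_general (K V : Type*) [Field K] [AddCommGroup V] [Module K V]
    (𝒜 : ℤ → Submodule K V)
    (circ : V →ₗ[K] V →ₗ[K] V) (one : V) (δ : V →ₗ[K] V)
    -- a 2-associative differential algebra structure
    (hcunit : ∀ v : V, circ one v = v ∧ circ v one = v)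
    (hone : one ∈ 𝒜 0)
    (hcdeg : ∀ (i j : ℤ) (v w : V), v ∈ 𝒜 i → w ∈ 𝒜 j → circ v w ∈ 𝒜 (i + j))
    (hδdeg : ∀ (i : ℤ), ∀ v ∈ 𝒜 i, δ v ∈ 𝒜 (i - 1))
    (hδ2 : δ ∘ₗ δ = 0)
    -- the family (m_n) and its recursive definition on homogeneous elements
    (m : List V → V)
    (hm1 : ∀ v : V, m [v] = δ v)
    (hmrec : ∀ l : List (Σ i : ℤ, 𝒜 i), 2 ≤ l.length →
      m (toV 𝒜 l)
        = δ (cprod circ one (toV 𝒜 l))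
          - ∑ k ∈ Finset.Icc 2 l.length, ∑ i ∈ Finset.range k,
              ((-1 : K) ^ degsum 𝒜 (l.take i)) •
                cprod circ one
                  ((toV 𝒜 l).take i
                    ++ m (((toV 𝒜 l).drop i).take (l.length - k + 1))
                      :: (toV 𝒜 l).drop (i + (l.length - k + 1)))) :
    -- the (shifted) A∞ relations, on homogeneous elements with Koszul signs
    ∀ l : List (Σ i : ℤ, 𝒜 i), 1 ≤ l.length →
      ∑ i ∈ Finset.range l.length, ∑ j ∈ Finset.range (l.length - i),
        ((-1 : K) ^ degsum 𝒜 (l.take i)) •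
          m ((toV 𝒜 l).take i
              ++ m (((toV 𝒜 l).drop i).take (l.length - i - j))
                :: (toV 𝒜 l).drop (l.length - j))
        = 0 := by
  intro l hl
  have hm : Borjeson.IsBorjesonProducts 𝒜 circ one δ m := ⟨hone, hcdeg, hδdeg, hm1, hmrec⟩
  have h := hm.coderiv_m_eq_zero (fun v => (hcunit v).2) hδ2 (List.length_pos_iff.mp hl)
  rw [Borjeson.coderiv, Borjeson.sum_pairsSumLt] at h
  rw [← h]
  refine Finset.sum_congr rfl fun i hi => Finset.sum_congr rfl fun j hj => ?_
  rw [hm.toV_collapse_mHom (by simp only [Finset.mem_range] at hi hj; omega)]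
  simp only [Borjeson.collapse, Borjeson.middle, Borjeson.length_toV]

/-- In a 2-associative differential algebra `(V, •, ∘, 1, ∂)`, Börjeson's
higher products `m_n` (defined by `m₁ = ∂` and the recursion
`m_n = ∂∘^{(n−1)} − Σ_{k=2}^n ∘^{(k−1)} Σ_{i+1+j=k} id^{⊗i} ⊗ m_{n−i−j} ⊗ id^{⊗j}`)
satisfy the shifted A∞ relations
`Σ_{i+j<n} m_{i+1+j}(id^{⊗i} ⊗ m_{n−i−j} ⊗ id^{⊗j}) = 0`, with Koszul signs on
homogeneous elements. -/
theorem stmt19 (K V : Type*) [Field K] [AddCommGroup V] [Module K V]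
    (𝒜 : ℤ → Submodule K V) [DirectSum.Decomposition 𝒜]
    (bullet circ : V →ₗ[K] V →ₗ[K] V) (one : V) (δ : V →ₗ[K] V)
    -- a 2-associative differential algebra structure
    (hbassoc : ∀ u v w : V, bullet (bullet u v) w = bullet u (bullet v w))
    (hcassoc : ∀ u v w : V, circ (circ u v) w = circ u (circ v w))
    (hbunit : ∀ v : V, bullet one v = v ∧ bullet v one = v)
    (hcunit : ∀ v : V, circ one v = v ∧ circ v one = v)
    (hone : one ∈ 𝒜 0)
    (hbdeg : ∀ (i j : ℤ) (v w : V), v ∈ 𝒜 i → w ∈ 𝒜 j → bullet v w ∈ 𝒜 (i + j))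
    (hcdeg : ∀ (i j : ℤ) (v w : V), v ∈ 𝒜 i → w ∈ 𝒜 j → circ v w ∈ 𝒜 (i + j))
    (hδdeg : ∀ (i : ℤ), ∀ v ∈ 𝒜 i, δ v ∈ 𝒜 (i - 1))
    (hδ2 : δ ∘ₗ δ = 0)
    (hderiv : ∀ (i : ℤ), ∀ x ∈ 𝒜 i, ∀ y : V,
      δ (bullet x y) = bullet (δ x) y + ((-1 : K) ^ i) • bullet x (δ y))
    -- the family (m_n) and its recursive definition on homogeneous elements
    (m : List V → V)
    (hm1 : ∀ v : V, m [v] = δ v)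
    (hmrec : ∀ l : List (Σ i : ℤ, 𝒜 i), 2 ≤ l.length →
      m (toV 𝒜 l)
        = δ (cprod circ one (toV 𝒜 l))
          - ∑ k ∈ Finset.Icc 2 l.length, ∑ i ∈ Finset.range k,
              ((-1 : K) ^ degsum 𝒜 (l.take i)) •
                cprod circ one
                  ((toV 𝒜 l).take i
                    ++ m (((toV 𝒜 l).drop i).take (l.length - k + 1))
                      :: (toV 𝒜 l).drop (i + (l.length - k + 1)))) :
    -- the (shifted) A∞ relations, on homogeneous elements with Koszul signs
    ∀ l : List (Σ i : ℤ, 𝒜 i), 1 ≤ l.length →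
      ∑ i ∈ Finset.range l.length, ∑ j ∈ Finset.range (l.length - i),
        ((-1 : K) ^ degsum 𝒜 (l.take i)) •
          m ((toV 𝒜 l).take i
              ++ m (((toV 𝒜 l).drop i).take (l.length - i - j))
                :: (toV 𝒜 l).drop (l.length - j))
        = 0 :=
  stmt19_general K V 𝒜 circ one δ hcunit hone hcdeg hδdeg hδ2 m hm1 hmrec
end
end
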